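/- In the Khalimsky plane, the COTS-distance between two pure points p = (i,j) and p' = (i',j') equals max(|i' - i|, |j' - j|). -/

import Mathlib

open Set

/-- The minimal open neighborhood of a point in a topological space. -/
def minOpenNhd {X : Type*} (t : TopologicalSpace X) (x : X) : Set X :=
  ⋂₀ {U : Set X | t.IsOpen U ∧ x ∈ U}

/-- The specialization-style preorder: `x ≤ y` iff `U_x ⊆ U_y`. -/
def specLE {X : Type*} (t : TopologicalSpace X) (x y : X) : Prop :=
  minOpenNhd t x ⊆ minOpenNhd t y

/-- Two points are adjacent if distinct and comparable in the specialization order. -/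
def Adjacent {X : Type*} (t : TopologicalSpace X) (x y : X) : Prop :=
  x ≠ y ∧ (specLE t x y ∨ specLE t y x)

/-- The adjacency set of a point. -/
def adjSet {X : Type*} (t : TopologicalSpace X) (x : X) : Set X := {y | Adjacent t x y}

/-- A COTS: a connected space in which every 3-point subset has a point separating
the other two. -/
def IsCOTS {X : Type*} (t : TopologicalSpace X) : Prop :=
  @ConnectedSpace X t ∧
    ∀ Y : Set X, Y.ncard = 3 →
      ∃ y ∈ Y, ∃ a ∈ Y \ {y}, ∃ b ∈ Y \ {y},
        @connectedComponentIn X t {y}ᶜ a ≠ @connectedComponentIn X t {y}ᶜ b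

/-- An endpoint of a COTS: a point with at most one neighbor. -/
def IsEndpoint {X : Type*} (t : TopologicalSpace X) (x : X) : Prop :=
  (adjSet t x).ncard ≤ 1

/-- A COTS-path: the continuous image of a finite COTS. -/
def IsCOTSPath {Y : Type*} (tY : TopologicalSpace Y) (P : Set Y) : Prop :=
  ∃ (C : Type) (tC : TopologicalSpace C), Finite C ∧ IsCOTS tC ∧
    ∃ f : C → Y, @Continuous C Y tC tY f ∧ Set.range f = P

/-- A COTS-path with prescribed start and end points. -/
def IsCOTSPathFromTo {Y : Type*} (tY : TopologicalSpace Y) (P : Set Y) (a b : Y) : Prop :=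
  ∃ (C : Type) (tC : TopologicalSpace C), Finite C ∧ IsCOTS tC ∧
    ∃ f : C → Y, @Continuous C Y tC tY f ∧ Set.range f = P ∧
      ∃ c₀ c₁ : C, IsEndpoint tC c₀ ∧ IsEndpoint tC c₁ ∧ f c₀ = a ∧ f c₁ = b

/-- A COTS-arc: the homeomorphic image of a finite COTS. -/
def IsCOTSArc {Y : Type*} (tY : TopologicalSpace Y) (A : Set Y) : Prop :=
  ∃ (C : Type) (tC : TopologicalSpace C), Finite C ∧ IsCOTS tC ∧
    ∃ f : C → Y, @Topology.IsEmbedding C Y tC tY f ∧ Set.range f = A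

/-- A COTS-arc with prescribed endpoints. -/
def IsCOTSArcFromTo {Y : Type*} (tY : TopologicalSpace Y) (A : Set Y) (a b : Y) : Prop :=
  ∃ (C : Type) (tC : TopologicalSpace C), Finite C ∧ IsCOTS tC ∧
    ∃ f : C → Y, @Topology.IsEmbedding C Y tC tY f ∧ Set.range f = A ∧
      ∃ c₀ c₁ : C, IsEndpoint tC c₀ ∧ IsEndpoint tC c₁ ∧ f c₀ = a ∧ f c₁ = b

/-- The COTS-distance: one less than the minimal cardinality of a COTS-arc
joining two points (`⊤` if there is no such arc). -/
noncomputable def cotsDist {X : Type*} (t : TopologicalSpace X) (x y : X) : ℕ∞ :=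
  sInf {n : ℕ∞ | ∃ A : Set X, IsCOTSArcFromTo t A x y ∧ (A.ncard : ℕ∞) = n + 1}

/-- The Khalimsky topology on ℤ. -/
def khal : TopologicalSpace ℤ :=
  TopologicalSpace.generateFrom
    {s : Set ℤ | ∃ n : ℤ, (Odd n ∧ s = {n}) ∨ (Even n ∧ s = {n - 1, n, n + 1})}

/-- The Khalimsky plane topology on ℤ × ℤ. -/
def khalPlane : TopologicalSpace (ℤ × ℤ) := @instTopologicalSpaceProd ℤ ℤ khal khal

/-- A point of the Khalimsky plane is pure if its coordinates have the same parity. -/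
def IsPurePt (p : ℤ × ℤ) : Prop := (Even p.1 ∧ Even p.2) ∨ (Odd p.1 ∧ Odd p.2)

/-- A digital Jordan curve: a finite set of at least 4 points such that removing
any point leaves a COTS-arc. -/
def IsJordanCurve {X : Type*} (t : TopologicalSpace X) (J : Set X) : Prop :=
  J.Finite ∧ 4 ≤ J.ncard ∧ ∀ j ∈ J, IsCOTSArc t (J \ {j})

/-- The interior of a digital Jordan curve in the Khalimsky plane: the union of the
finite (bounded) connected components of its complement. -/
def jInterior (J : Set (ℤ × ℤ)) : Set (ℤ × ℤ) :=
  ⋃₀ {S | ∃ p ∉ J, S = @connectedComponentIn _ khalPlane Jᶜ p ∧ S.Finite}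

/-!
A connected subset of an Alexandrov-discrete space is chained by specializations, so a function
to ℤ that changes by at most one along specializations takes every intermediate value on it. In
the Khalimsky plane the Chebyshev distance to `p` is such a function, so any COTS-arc from `p` to
`p'` has at least `max |i' - i| |j' - j| + 1` points. Conversely, the lattice path from a pure
point `p` that moves diagonally and then along an axis passes between comparable points at every
step, and the Chebyshev distance to `p` is injective on it. An injective function of this kind
orders a finite connected space like a Khalimsky interval, so the path is a COTS-arc with exactly
that many points.
-/

open Topology Filter

section General

variable {X : Type*}

lemma specLE_iff_specializes [t : TopologicalSpace X] {x y : X} : specLE t x y ↔ x ⤳ y := by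
  rw [specializes_iff_nhdsKer_subset, nhdsKer_def, nhdsKer_def]
  simp only [singleton_subset_iff]
  rfl

lemma Specializes.isPreconnected_pair [TopologicalSpace X] {x y : X} (h : x ⤳ y) :
    IsPreconnected ({x, y} : Set X) :=
  isPreconnected_singleton.subset_closure (singleton_subset_iff.2 (mem_insert x {y}))
    (insert_subset (subset_closure rfl) (singleton_subset_iff.2 h.mem_closure))

lemma Int.uIcc_subset_pair {a b : ℤ} (h : |a - b| ≤ 1) : uIcc a b ⊆ {a, b} := by
  intro k hk
  rw [mem_uIcc] at hk
  rw [abs_le] at h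
  simp only [mem_insert_iff, mem_singleton_iff]
  omega

lemma IsPreconnected.uIcc_subset_image [TopologicalSpace X] [AlexandrovDiscrete X] {S : Set X}
    (hS : IsPreconnected S) {φ : X → ℤ} (hφ : ∀ x y, x ⤳ y → |φ x - φ y| ≤ 1) {x y : X}
    (hx : x ∈ S) (hy : y ∈ S) : uIcc (φ x) (φ y) ⊆ φ '' S := by
  refine hS.induction₂ (fun x y => uIcc (φ x) (φ y) ⊆ φ '' S) (fun x hx => ?_)
    (fun x y z _ _ _ hxy hyz => uIcc_subset_uIcc_union_uIcc.trans (union_subset hxy hyz))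
    (fun x y _ _ h => uIcc_comm (φ y) (φ x) ▸ h) hx hy
  have hnhds : nhdsKer {x} ∈ 𝓝 x := by
    rw [← principal_nhdsKer_singleton]; exact mem_principal_self _
  filter_upwards [nhdsWithin_le_nhds hnhds, self_mem_nhdsWithin] with y hyx hyS
  refine (Int.uIcc_subset_pair ?_).trans (insert_subset (mem_image_of_mem φ hx)
    (singleton_subset_iff.2 (mem_image_of_mem φ hyS)))
  rw [abs_sub_comm]
  exact hφ y x (mem_nhdsKer_singleton.1 hyx)

lemma IsPreconnected.natAbs_sub_lt_ncard [TopologicalSpace X] [AlexandrovDiscrete X] {S : Set X}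
    (hS : IsPreconnected S) (hfin : S.Finite) {φ : X → ℤ}
    (hφ : ∀ x y, x ⤳ y → |φ x - φ y| ≤ 1) {x y : X} (hx : x ∈ S) (hy : y ∈ S) :
    (φ y - φ x).natAbs < S.ncard :=
  calc (φ y - φ x).natAbs < (uIcc (φ x) (φ y)).ncard := by
        rw [← Finset.coe_uIcc, ncard_coe_finset, Int.card_uIcc]; omega
    _ ≤ (φ '' S).ncard := ncard_le_ncard (hS.uIcc_subset_image hφ hx hy) (hfin.image φ)
    _ ≤ S.ncard := ncard_image_le hfin

lemma connectedComponentIn_ne_of_lt [TopologicalSpace X] [AlexandrovDiscrete X] {φ : X → ℤ}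
    (hinj : Function.Injective φ) (hφ : ∀ x y, x ⤳ y → |φ x - φ y| ≤ 1) {a b c : X}
    (hab : φ a < φ b) (hbc : φ b < φ c) :
    connectedComponentIn {b}ᶜ a ≠ connectedComponentIn {b}ᶜ c := by
  intro heq
  have ha : a ∈ connectedComponentIn {b}ᶜ a := mem_connectedComponentIn (by grind)
  have hc : c ∈ connectedComponentIn {b}ᶜ a := heq ▸ mem_connectedComponentIn (by grind)
  obtain ⟨x, hx, hxb⟩ := isPreconnected_connectedComponentIn.uIcc_subset_image hφ ha hc
    (mem_uIcc.2 (Or.inl ⟨hab.le, hbc.le⟩))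
  exact connectedComponentIn_subset _ _ hx (hinj hxb)

lemma isCOTS_of_injective [t : TopologicalSpace X] [AlexandrovDiscrete X] [ConnectedSpace X]
    {φ : X → ℤ} (hinj : Function.Injective φ) (hφ : ∀ x y, x ⤳ y → |φ x - φ y| ≤ 1) :
    IsCOTS t := by
  refine ⟨inferInstance, fun Y hY => ?_⟩
  have key : ∀ a ∈ Y, ∀ b ∈ Y, ∀ c ∈ Y, φ a < φ b → φ b < φ c → ∃ m ∈ Y, ∃ u ∈ Y \ {m},
      ∃ v ∈ Y \ {m}, connectedComponentIn {m}ᶜ u ≠ connectedComponentIn {m}ᶜ v :=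
    fun a ha b hb c hc hab hbc => ⟨b, hb, a, ⟨ha, fun h => hab.ne (congrArg φ h)⟩,
      c, ⟨hc, fun h => hbc.ne' (congrArg φ h)⟩, connectedComponentIn_ne_of_lt hinj hφ hab hbc⟩
  obtain ⟨x, y, z, hxy, hxz, hyz, rfl⟩ := ncard_eq_three.mp hY
  rcases lt_or_gt_of_ne (hinj.ne hxy) with h₁ | h₁ <;>
    rcases lt_or_gt_of_ne (hinj.ne hxz) with h₂ | h₂ <;>
    rcases lt_or_gt_of_ne (hinj.ne hyz) with h₃ | h₃ <;>
    first
    | exact key x (by simp) y (by simp) z (by simp) (by omega) (by omega)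
    | exact key x (by simp) z (by simp) y (by simp) (by omega) (by omega)
    | exact key y (by simp) x (by simp) z (by simp) (by omega) (by omega)
    | exact key y (by simp) z (by simp) x (by simp) (by omega) (by omega)
    | exact key z (by simp) x (by simp) y (by simp) (by omega) (by omega)
    | exact key z (by simp) y (by simp) x (by simp) (by omega) (by omega)

lemma isEndpoint_of_forall_le [t : TopologicalSpace X] {φ : X → ℤ}
    (hinj : Function.Injective φ) (hφ : ∀ x y, x ⤳ y → |φ x - φ y| ≤ 1) {x : X}
    (hmax : ∀ y, φ y ≤ φ x) : IsEndpoint t x := by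
  have hsub : adjSet t x ⊆ φ ⁻¹' {φ x - 1} := by
    rintro y ⟨hne, hspec⟩
    have hdist : |φ x - φ y| ≤ 1 := by
      simp only [specLE_iff_specializes] at hspec
      exact hspec.elim (hφ x y) fun h => abs_sub_comm (φ x) (φ y) ▸ hφ y x h
    have := hmax y; have := hinj.ne hne
    rw [abs_le] at hdist; simp only [mem_preimage, mem_singleton_iff]; omega
  have hsing : (adjSet t x).Subsingleton := (subsingleton_singleton.preimage hinj).anti hsub
  exact (ncard_le_one hsing.finite).2 hsing

lemma isCOTSArcFromTo_of_injOn {Y : Type} [t : TopologicalSpace Y] [AlexandrovDiscrete Y]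
    {A : Set Y} (hA : IsPreconnected A) (hfin : A.Finite) {φ : Y → ℤ} (hinj : InjOn φ A)
    (hφ : ∀ x y, x ⤳ y → |φ x - φ y| ≤ 1) {a b : Y} (ha : a ∈ A) (hb : b ∈ A)
    (hmin : ∀ x ∈ A, φ a ≤ φ x) (hmax : ∀ x ∈ A, φ x ≤ φ b) : IsCOTSArcFromTo t A a b := by
  have hfinA : Finite A := hfin.to_subtype
  have : ConnectedSpace A := isConnected_iff_connectedSpace.1 ⟨⟨a, ha⟩, hA⟩
  have hinj' : Function.Injective (φ ∘ Subtype.val : A → ℤ) := hinj.injective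
  have hφ' : ∀ x y : A, x ⤳ y → |φ x - φ y| ≤ 1 :=
    fun x y h => hφ x y (h.map continuous_subtype_val)
  refine ⟨A, inferInstance, hfinA, isCOTS_of_injective hinj' hφ', (↑), IsEmbedding.subtypeVal,
    Subtype.range_coe, ⟨a, ha⟩, ⟨b, hb⟩, ?_, ?_, rfl, rfl⟩
  · refine isEndpoint_of_forall_le (φ := fun x : A => -φ x) (neg_injective.comp hinj')
      (fun x y h => ?_) (fun x => neg_le_neg (hmin x x.2))
    rw [neg_sub_neg, abs_sub_comm]; exact hφ' x y h
  · exact isEndpoint_of_forall_le hinj' hφ' fun x => hmax x x.2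

lemma IsCOTSArcFromTo.natAbs_sub_lt_ncard {Y : Type*} [t : TopologicalSpace Y]
    [AlexandrovDiscrete Y] {A : Set Y} {a b : Y} (h : IsCOTSArcFromTo t A a b) {φ : Y → ℤ}
    (hφ : ∀ x y, x ⤳ y → |φ x - φ y| ≤ 1) : (φ b - φ a).natAbs < A.ncard := by
  obtain ⟨C, tC, hfin, hcots, f, hf, rfl, c₀, c₁, -, -, rfl, rfl⟩ := h
  have : PreconnectedSpace C := hcots.1.toPreconnectedSpace
  exact (isPreconnected_range hf.continuous).natAbs_sub_lt_ncard (finite_range f) hφ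
    (mem_range_self c₀) (mem_range_self c₁)

end General

section Khalimsky

def khalNhd (n : ℤ) : Set ℤ := {x | x = n ∨ (Even n ∧ (x = n - 1 ∨ x = n + 1))}

lemma isOpen_khalNhd (n : ℤ) : IsOpen[khal] (khalNhd n) := by
  refine TopologicalSpace.GenerateOpen.basic _ ⟨n, ?_⟩
  rcases Int.even_or_odd n with h | h
  · refine Or.inr ⟨h, ?_⟩
    ext x; simp only [khalNhd, mem_ofPred_eq, mem_insert_iff, mem_singleton_iff]; tauto
  · refine Or.inl ⟨h, ?_⟩
    ext x; simp [khalNhd, Int.not_even_iff_odd.2 h]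

lemma khalNhd_subset_of_isOpen {U : Set ℤ} (hU : IsOpen[khal] U) {n : ℤ} (hn : n ∈ U) :
    khalNhd n ⊆ U := by
  induction hU generalizing n with
  | basic s hs =>
    obtain ⟨m, ⟨hm, rfl⟩ | ⟨hm, rfl⟩⟩ := hs <;> intro x hx <;>
      simp only [khalNhd, mem_ofPred_eq, mem_insert_iff, mem_singleton_iff, Int.even_iff,
        Int.odd_iff] at hm hn hx ⊢ <;> omega
  | univ => exact subset_univ _
  | inter u v _ _ ihu ihv => exact subset_inter (ihu hn.1) (ihv hn.2)
  | sUnion S _ ih =>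
    obtain ⟨u, hu, hnu⟩ := hn
    exact (ih u hu hnu).trans (subset_sUnion_of_mem hu)

instance khal_alexandrovDiscrete : @AlexandrovDiscrete ℤ khal :=
  @AlexandrovDiscrete.mk ℤ khal fun S hS => by
    have heq : ⋂₀ S = ⋃ n ∈ ⋂₀ S, khalNhd n :=
      subset_antisymm (fun n hn => mem_biUnion hn (show n ∈ khalNhd n from Or.inl rfl))
        (iUnion₂_subset fun n hn =>
        subset_sInter fun s hs => khalNhd_subset_of_isOpen (hS s hs) (hn s hs))
    rw [heq]
    exact @isOpen_biUnion ℤ ℤ khal _ _ fun n _ => isOpen_khalNhd n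

lemma khal_specializes_iff {a b : ℤ} : @Specializes ℤ khal a b ↔ a ∈ khalNhd b := by
  rw [@specializes_iff_forall_open ℤ khal]
  exact ⟨fun h => h _ (isOpen_khalNhd b) (Or.inl rfl),
    fun h U hU hb => khalNhd_subset_of_isOpen hU hb h⟩

instance khalPlane_alexandrovDiscrete : @AlexandrovDiscrete (ℤ × ℤ) khalPlane :=
  @Prod.instAlexandrovDiscrete ℤ ℤ khal khal _ _

lemma khalPlane_specializes_iff {x y : ℤ × ℤ} :
    @Specializes _ khalPlane x y ↔ x.1 ∈ khalNhd y.1 ∧ x.2 ∈ khalNhd y.2 := by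
  rw [← khal_specializes_iff, ← khal_specializes_iff]
  exact @specializes_prod ℤ ℤ khal khal x.1 y.1 x.2 y.2

def chebDist (p q : ℤ × ℤ) : ℕ := max (q.1 - p.1).natAbs (q.2 - p.2).natAbs

@[simp] lemma chebDist_self (p : ℤ × ℤ) : chebDist p p = 0 := by simp [chebDist]

lemma abs_chebDist_sub_le_one (p : ℤ × ℤ) {x y : ℤ × ℤ} (h : @Specializes _ khalPlane x y) :
    |(chebDist p x : ℤ) - chebDist p y| ≤ 1 := by
  rw [khalPlane_specializes_iff] at h
  simp only [khalNhd, mem_ofPred_eq] at h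
  rw [abs_le]; unfold chebDist; omega

lemma IsCOTSArcFromTo.chebDist_lt_ncard {A : Set (ℤ × ℤ)} {p q : ℤ × ℤ}
    (h : IsCOTSArcFromTo khalPlane A p q) : chebDist p q < A.ncard := by
  simpa using @IsCOTSArcFromTo.natAbs_sub_lt_ncard _ khalPlane _ _ _ _ h
    (fun x => (chebDist p x : ℤ)) (fun x y => abs_chebDist_sub_le_one p)

def towards (c c' : ℤ) (n : ℕ) : ℤ := c + max (-(n : ℤ)) (min (n : ℤ) (c' - c))

def diagPath (p q : ℤ × ℤ) (n : ℕ) : ℤ × ℤ := (towards p.1 q.1 n, towards p.2 q.2 n)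

section Towards

variable (c c' : ℤ)

lemma towards_zero : towards c c' 0 = c := by simp [towards]

lemma towards_of_natAbs_le {n : ℕ} (h : (c' - c).natAbs ≤ n) : towards c c' n = c' := by
  unfold towards; omega

lemma towards_min {d : ℕ} (hd : (c' - c).natAbs ≤ d) (n : ℕ) :
    towards c c' (min n d) = towards c c' n := by
  unfold towards; omega

lemma natAbs_towards_sub (n : ℕ) : (towards c c' n - c).natAbs = min n (c' - c).natAbs := by
  unfold towards; omega

lemma towards_mem_khalNhd_succ {n : ℕ} (h : Odd (c + n)) :
    towards c c' n ∈ khalNhd (towards c c' (n + 1)) := by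
  rw [Int.odd_iff] at h
  simp only [khalNhd, towards, mem_ofPred_eq, Int.even_iff]; omega

lemma towards_succ_mem_khalNhd {n : ℕ} (h : Even (c + n)) :
    towards c c' (n + 1) ∈ khalNhd (towards c c' n) := by
  rw [Int.even_iff] at h
  simp only [khalNhd, towards, mem_ofPred_eq, Int.even_iff]; omega

end Towards

lemma IsPurePt.even_add_fst_iff {p : ℤ × ℤ} (hp : IsPurePt p) (n : ℤ) :
    Even (p.1 + n) ↔ Even (p.2 + n) := by
  rcases hp with ⟨h₁, h₂⟩ | ⟨h₁, h₂⟩ <;> simp only [Int.even_iff, Int.odd_iff] at h₁ h₂ ⊢ <;> omega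

section DiagPath

variable (p q : ℤ × ℤ)

lemma diagPath_zero : diagPath p q 0 = p :=
  Prod.ext (towards_zero _ _) (towards_zero _ _)

lemma diagPath_chebDist : diagPath p q (chebDist p q) = q :=
  Prod.ext (towards_of_natAbs_le _ _ (le_max_left _ _))
    (towards_of_natAbs_le _ _ (le_max_right _ _))

lemma diagPath_min (n : ℕ) : diagPath p q (min n (chebDist p q)) = diagPath p q n :=
  Prod.ext (towards_min _ _ (le_max_left _ _) n) (towards_min _ _ (le_max_right _ _) n)

lemma chebDist_diagPath (n : ℕ) : chebDist p (diagPath p q n) = min n (chebDist p q) := by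
  simp only [chebDist, diagPath, natAbs_towards_sub, min_max_distrib_left]

lemma range_diagPath_subset : range (diagPath p q) ⊆ diagPath p q '' Iic (chebDist p q) := by
  rintro _ ⟨n, rfl⟩
  exact ⟨min n (chebDist p q), mem_Iic.2 (min_le_right _ _), diagPath_min p q n⟩

end DiagPath

lemma diagPath_specializes_succ {p : ℤ × ℤ} (hp : IsPurePt p) (q : ℤ × ℤ) (n : ℕ) :
    @Specializes _ khalPlane (diagPath p q n) (diagPath p q (n + 1)) ∨
      @Specializes _ khalPlane (diagPath p q (n + 1)) (diagPath p q n) := by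
  simp only [khalPlane_specializes_iff, diagPath]
  -- Purity of `p` makes both coordinates that still move at step `n` have the parity of `p.1 + n`.
  by_cases h : Even (p.1 + n)
  · exact Or.inr ⟨towards_succ_mem_khalNhd _ _ h,
      towards_succ_mem_khalNhd _ _ ((hp.even_add_fst_iff n).1 h)⟩
  · have h' : ¬Even (p.2 + n) := (hp.even_add_fst_iff n).not.1 h
    exact Or.inl ⟨towards_mem_khalNhd_succ _ _ (Int.not_even_iff_odd.1 h),
      towards_mem_khalNhd_succ _ _ (Int.not_even_iff_odd.1 h')⟩

lemma isPreconnected_range_diagPath {p : ℤ × ℤ} (hp : IsPurePt p) (q : ℤ × ℤ) :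
    @IsPreconnected _ khalPlane (range (diagPath p q)) := by
  have hrange : range (diagPath p q) = ⋃ n, {diagPath p q n, diagPath p q (n + 1)} := by
    ext z
    simp only [mem_range, mem_iUnion, mem_insert_iff, mem_singleton_iff]
    exact ⟨fun ⟨n, h⟩ => ⟨n, Or.inl h.symm⟩, fun ⟨n, h⟩ => h.elim (⟨n, ·.symm⟩) (⟨n + 1, ·.symm⟩)⟩
  rw [hrange]
  refine @IsPreconnected.iUnion_of_chain _ _ khalPlane _ _ _ _ (fun n => ?_)
    fun n => ⟨diagPath p q (n + 1), by simp [Order.succ_eq_add_one]⟩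
  rcases diagPath_specializes_succ hp q n with h | h
  · exact @Specializes.isPreconnected_pair _ khalPlane _ _ h
  · exact pair_comm (diagPath p q n) _ ▸ @Specializes.isPreconnected_pair _ khalPlane _ _ h

lemma isCOTSArcFromTo_range_diagPath {p : ℤ × ℤ} (hp : IsPurePt p) (q : ℤ × ℤ) :
    IsCOTSArcFromTo khalPlane (range (diagPath p q)) p q := by
  have hinj : InjOn (fun x => (chebDist p x : ℤ)) (range (diagPath p q)) := by
    rintro _ ⟨m, rfl⟩ _ ⟨n, rfl⟩ h
    simp only [chebDist_diagPath, Nat.cast_inj] at h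
    rw [← diagPath_min, h, diagPath_min]
  refine @isCOTSArcFromTo_of_injOn _ khalPlane _ _ (isPreconnected_range_diagPath hp q)
    (((finite_Iic _).image _).subset (range_diagPath_subset p q)) _ hinj
    (fun x y => abs_chebDist_sub_le_one p) _ _ ⟨0, diagPath_zero p q⟩
    ⟨_, diagPath_chebDist p q⟩ (by simp) ?_
  rintro _ ⟨n, rfl⟩
  exact Nat.cast_le.2 (chebDist_diagPath p q n ▸ min_le_right _ _)

lemma ncard_range_diagPath {p : ℤ × ℤ} (hp : IsPurePt p) (q : ℤ × ℤ) :
    (range (diagPath p q)).ncard = chebDist p q + 1 := by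
  refine le_antisymm ?_ ?_
  · calc (range (diagPath p q)).ncard ≤ (diagPath p q '' Iic (chebDist p q)).ncard :=
          ncard_le_ncard (range_diagPath_subset p q) ((finite_Iic _).image _)
      _ ≤ (Iic (chebDist p q)).ncard := ncard_image_le (finite_Iic _)
      _ = chebDist p q + 1 := ncard_Iic_nat _
  · exact (isCOTSArcFromTo_range_diagPath hp q).chebDist_lt_ncard

end Khalimsky

theorem stmt10_general (p p' : ℤ × ℤ) (hp : IsPurePt p) :
    cotsDist khalPlane p p' =
      ((max (p'.1 - p.1).natAbs (p'.2 - p.2).natAbs : ℕ) : ℕ∞) := by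
  change cotsDist khalPlane p p' = (chebDist p p' : ℕ∞)
  apply le_antisymm
  · exact sInf_le ⟨_, isCOTSArcFromTo_range_diagPath hp p',
      by rw [ncard_range_diagPath hp p']; push_cast; rfl⟩
  · refine le_sInf ?_
    rintro n ⟨A, hA, hcard⟩
    rw [← ENat.add_le_add_iff_right ENat.one_ne_top, ← hcard]
    exact_mod_cast hA.chebDist_lt_ncard

/-- The COTS-distance between two pure points of the Khalimsky plane is the maximum
of the coordinate differences. -/
theorem stmt10 (p p' : ℤ × ℤ) (hp : IsPurePt p) (hp' : IsPurePt p') :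
    cotsDist khalPlane p p' =
      ((max (p'.1 - p.1).natAbs (p'.2 - p.2).natAbs : ℕ) : ℕ∞) :=
  stmt10_general p p' hp
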